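/- arXiv:1110.6247 — 2 statements merged into one kernel-verified Lean document; each statement's English description precedes it below -/
import Mathlib

section
/- Let T > 0, α > 0, and let u, v : [0,1] × [0,T] → ℝ be C² functions solving v_t − (u v)_x = v_xx on (0,1) × (0,T] with Neumann boundary conditions v_x(0,t) = v_x(1,t) = 0 and initial data v(x,0) ≥ α. Let M = sup_{[0,1]×[0,T]} |u_x(x,t)| and assume M < ∞. Then for all (x,t) ∈ [0,1] × [0,T]: v(x,t) ≥ α e^{−M t} ≥ α e^{−M T}. -/
open MeasureTheory

/-- Partial derivative in the spatial variable `x` (first argument). -/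
noncomputable def pdx (f : ℝ → ℝ → ℝ) : ℝ → ℝ → ℝ := fun x t => deriv (fun y => f y t) x

/-- Partial derivative in the time variable `t` (second argument). -/
noncomputable def pdt (f : ℝ → ℝ → ℝ) : ℝ → ℝ → ℝ := fun x t => deriv (fun s => f x s) t

/-!
Writing the equation in non-divergence form `v_t = v_xx + u v_x + u_x v`, the function
`w = e^{kt} v` satisfies `w_t = w_xx + u w_x + (u_x + k) w` with the same Neumann data.
A minimum principle for such equations holds as long as the zeroth-order term `c w` is
nonnegative wherever `w` drops below the bound: at the minimum of `w + ε t` over the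
space-time rectangle, `w_x = 0` (by the Neumann condition at the boundary), `w_xx ≥ 0` and
`w_t ≤ -ε`. With `k = -M` the coefficient is `≤ 0`, which gives `v ≥ 0`; then with `k = M` it
is `≥ 0`, which gives `e^{Mt} v ≥ α`.
-/
open Set Function Filter Topology

section PartialDerivatives

variable {f : ℝ → ℝ → ℝ} {x t : ℝ}

theorem hasDerivAt_pdx (hf : DifferentiableAt ℝ (uncurry f) (x, t)) :
    HasDerivAt (fun y => f y t) (pdx f x t) x :=
  (hf.comp x (differentiableAt_id.prodMk (differentiableAt_const t)) :
    DifferentiableAt ℝ (uncurry f ∘ fun y => (y, t)) x).hasDerivAt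

theorem hasDerivAt_pdt (hf : DifferentiableAt ℝ (uncurry f) (x, t)) :
    HasDerivAt (fun s => f x s) (pdt f x t) t :=
  (hf.comp t ((differentiableAt_const x).prodMk differentiableAt_id) :
    DifferentiableAt ℝ (uncurry f ∘ fun s => (x, s)) t).hasDerivAt

theorem pdx_eq_fderiv (hf : DifferentiableAt ℝ (uncurry f) (x, t)) :
    pdx f x t = fderiv ℝ (uncurry f) (x, t) (1, 0) :=
  (hasDerivAt_pdx hf).unique <|
    hf.hasFDerivAt.comp_hasDerivAt (l := uncurry f) x
      ((hasDerivAt_id' x).prodMk (hasDerivAt_const x t))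

theorem pdt_eq_fderiv (hf : DifferentiableAt ℝ (uncurry f) (x, t)) :
    pdt f x t = fderiv ℝ (uncurry f) (x, t) (0, 1) :=
  (hasDerivAt_pdt hf).unique <|
    hf.hasFDerivAt.comp_hasDerivAt (l := uncurry f) t
      ((hasDerivAt_const t x).prodMk (hasDerivAt_id' t))

variable {n : WithTop ℕ∞}

theorem contDiff_uncurry_pdx (hf : ContDiff ℝ (n + 1) (uncurry f)) :
    ContDiff ℝ n (uncurry (pdx f)) := by
  have hdiff := hf.differentiable (by simp)
  have : uncurry (pdx f) = fun p => fderiv ℝ (uncurry f) p (1, 0) :=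
    funext fun p => pdx_eq_fderiv (hdiff p)
  rw [this]
  exact (hf.fderiv_right le_rfl).clm_apply contDiff_const

theorem contDiff_uncurry_pdt (hf : ContDiff ℝ (n + 1) (uncurry f)) :
    ContDiff ℝ n (uncurry (pdt f)) := by
  have hdiff := hf.differentiable (by simp)
  have : uncurry (pdt f) = fun p => fderiv ℝ (uncurry f) p (0, 1) :=
    funext fun p => pdt_eq_fderiv (hdiff p)
  rw [this]
  exact (hf.fderiv_right le_rfl).clm_apply contDiff_const

theorem pdx_const_mul (g : ℝ → ℝ) (f : ℝ → ℝ → ℝ) :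
    pdx (fun x t => g t * f x t) = fun x t => g t * pdx f x t := by
  ext x t
  exact deriv_const_mul_field _

end PartialDerivatives

section OneVariable

variable {f f' : ℝ → ℝ} {a b x₀ d : ℝ}

theorem IsMinOn.hasDerivAt_nonpos_of_mem_Ioc (hmin : IsMinOn f (Icc a b) x₀)
    (hx₀ : x₀ ∈ Ioc a b) (hd : HasDerivAt f d x₀) : d ≤ 0 := by
  have hcone : a - x₀ ∈ posTangentConeAt (Icc a b) x₀ :=
    mem_posTangentConeAt_of_segment_subset <| by
      rw [add_sub_cancel]
      exact (convex_Icc a b).segment_subset (Ioc_subset_Icc_self hx₀)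
        (left_mem_Icc.2 (hx₀.1.le.trans hx₀.2))
  have := hmin.localize.hasFDerivWithinAt_nonneg hd.hasFDerivAt.hasFDerivWithinAt hcone
  simp only [ContinuousLinearMap.toSpanSingleton_apply, smul_eq_mul] at this
  nlinarith [hx₀.1]

theorem second_deriv_nonneg_of_isMinOn_Icc_left (hab : a < b) (hmin : IsMinOn f (Icc a b) a)
    (hf : ∀ x ∈ Icc a b, HasDerivAt f (f' x) x) (hf'a : f' a = 0) (hd : HasDerivAt f' d a) :
    0 ≤ d := by
  by_contra! hd₀
  -- then `f' < 0` just right of `a`, whereas the mean value theorem gives `f' ξ ≥ 0` there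
  have hslope : ∀ᶠ ξ in 𝓝[>] a, slope f' a ξ < 0 :=
    ((hasDerivAt_iff_tendsto_slope.mp hd).mono_left (nhdsGT_le_nhdsNE a)).eventually
      (eventually_lt_nhds hd₀)
  obtain ⟨c, hac, hc⟩ := mem_nhdsGT_iff_exists_Ioc_subset.mp hslope
  set z := min c b
  have haz : a < z := lt_min hac hab
  have hzab : Icc a z ⊆ Icc a b := Icc_subset_Icc_right (min_le_right c b)
  obtain ⟨ξ, hξ, hξeq⟩ := exists_hasDerivAt_eq_slope f f' haz
    (fun x hx => (hf x (hzab hx)).continuousAt.continuousWithinAt)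
    (fun x hx => hf x (hzab (Ioo_subset_Icc_self hx)))
  have hneg : slope f' a ξ < 0 := hc ⟨hξ.1, hξ.2.le.trans (min_le_left c b)⟩
  have hmvt : 0 ≤ f' ξ := hξeq ▸ div_nonneg (sub_nonneg.2 (hmin (hzab (right_mem_Icc.2 haz.le))))
    (sub_nonneg.2 haz.le)
  rw [slope_def_field, hf'a, sub_zero] at hneg
  exact (div_nonneg hmvt (sub_nonneg.2 hξ.1.le)).not_gt hneg

theorem second_deriv_nonneg_of_isMinOn_Icc (hab : a < b) (hmin : IsMinOn f (Icc a b) x₀)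
    (hx₀ : x₀ ∈ Icc a b) (hf : ∀ x ∈ Icc a b, HasDerivAt f (f' x) x) (hf'₀ : f' x₀ = 0)
    (hd : HasDerivAt f' d x₀) : 0 ≤ d := by
  rcases hx₀.2.lt_or_eq with hx₀b | rfl
  · exact second_deriv_nonneg_of_isMinOn_Icc_left hx₀b
      (hmin.on_subset (Icc_subset_Icc_left hx₀.1))
      (fun x hx => hf x ⟨hx₀.1.trans hx.1, hx.2⟩) hf'₀ hd
  -- at the right endpoint, reflect through the origin
  refine second_deriv_nonneg_of_isMinOn_Icc_left (f := fun x => f (-x)) (f' := fun x => -f' (-x))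
    (neg_lt_neg hab) (fun y hy => ?_) (fun y hy => ?_) (by simp [hf'₀]) ?_
  · simpa using hmin ⟨le_neg.1 hy.2, neg_le.1 hy.1⟩
  · simpa [Function.comp_def] using
      (hf (-y) ⟨le_neg.1 hy.2, neg_le.1 hy.1⟩).comp y (hasDerivAt_neg y)
  · rw [← neg_neg x₀] at hd
    simpa using (hd.comp (-x₀) (hasDerivAt_neg (-x₀))).fun_neg

end OneVariable

section MinimumPrinciple

noncomputable def ellipticOp (u c w : ℝ → ℝ → ℝ) (x t : ℝ) : ℝ :=
  pdx (pdx w) x t + u x t * pdx w x t + c x t * w x t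

variable {a b T β : ℝ} {w u c : ℝ → ℝ → ℝ}

theorem exists_tilted_min (hw : Continuous (uncurry w)) (hinit : ∀ x ∈ Icc a b, β ≤ w x 0)
    {x₁ t₁ : ℝ} (hx₁ : x₁ ∈ Icc a b) (ht₁ : t₁ ∈ Icc 0 T) (hlt : w x₁ t₁ < β) :
    ∃ ε > 0, ∃ x₀ ∈ Icc a b, ∃ t₀ ∈ Ioc 0 T, w x₀ t₀ < β ∧
      ∀ x ∈ Icc a b, ∀ t ∈ Icc 0 T, w x₀ t₀ + ε * t₀ ≤ w x t + ε * t := by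
  set ε := (β - w x₁ t₁) / (T + 1)
  have hε : 0 < ε := div_pos (by linarith) (by linarith [ht₁.1, ht₁.2])
  have hεT : ε * T < β - w x₁ t₁ := by
    rw [div_mul_eq_mul_div, div_lt_iff₀ (by linarith [ht₁.1, ht₁.2])]
    nlinarith
  obtain ⟨⟨x₀, t₀⟩, ⟨hx₀, ht₀⟩, hmin⟩ := (isCompact_Icc.prod isCompact_Icc).exists_isMinOn
    ⟨(x₁, t₁), hx₁, ht₁⟩ (hw.add (continuous_const.mul continuous_snd)).continuousOn
  have hmin' : ∀ x ∈ Icc a b, ∀ t ∈ Icc 0 T, w x₀ t₀ + ε * t₀ ≤ w x t + ε * t :=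
    fun x hx t ht => hmin (mk_mem_prod hx ht)
  have hlt₀ : w x₀ t₀ + ε * t₀ < β := by
    nlinarith [hmin' x₁ hx₁ t₁ ht₁, ht₁.2]
  have ht₀pos : 0 < t₀ := by
    refine ht₀.1.lt_of_ne fun h => ?_
    subst h
    linarith [hinit x₀ hx₀]
  exact ⟨ε, hε, x₀, hx₀, t₀, ⟨ht₀pos, ht₀.2⟩, by nlinarith, hmin'⟩

theorem le_of_neumann_supersolution (hab : a < b) (hw : ContDiff ℝ 2 (uncurry w))
    (hsuper : ∀ x ∈ Icc a b, ∀ t ∈ Ioc 0 T, ellipticOp u c w x t ≤ pdt w x t)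
    (hbc : ∀ t ∈ Ioc 0 T, pdx w a t = 0 ∧ pdx w b t = 0)
    (hinit : ∀ x ∈ Icc a b, β ≤ w x 0)
    (hsign : ∀ x ∈ Icc a b, ∀ t ∈ Ioc 0 T, w x t < β → 0 ≤ c x t * w x t) :
    ∀ x ∈ Icc a b, ∀ t ∈ Icc 0 T, β ≤ w x t := by
  by_contra! ⟨x₁, hx₁, t₁, ht₁, hlt⟩
  -- tilting by `ε t` makes the time derivative strictly negative at the minimum
  obtain ⟨ε, hε, x₀, hx₀, t₀, ht₀, hwβ, hmin⟩ :=
    exists_tilted_min hw.continuous hinit hx₁ ht₁ hlt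
  have hdiff := hw.differentiable two_ne_zero
  have hdiff_pdx := (contDiff_uncurry_pdx (n := 1) hw).differentiable one_ne_zero
  have hmin_x : IsMinOn (fun x => w x t₀) (Icc a b) x₀ := fun x hx => by
    simpa using hmin x hx t₀ (Ioc_subset_Icc_self ht₀)
  have hmin_t : IsMinOn (fun t => w x₀ t + ε * t) (Icc 0 T) t₀ := fun t ht => hmin x₀ hx₀ t ht
  have hwx : pdx w x₀ t₀ = 0 := by
    rcases hx₀.1.eq_or_lt with rfl | hax
    · exact (hbc t₀ ht₀).1
    rcases hx₀.2.eq_or_lt with rfl | hxb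
    · exact (hbc t₀ ht₀).2
    exact (hmin_x.isLocalMin (Icc_mem_nhds hax hxb)).hasDerivAt_eq_zero
      (hasDerivAt_pdx (hdiff _))
  have hwxx : 0 ≤ pdx (pdx w) x₀ t₀ := second_deriv_nonneg_of_isMinOn_Icc hab hmin_x hx₀
    (fun x _ => hasDerivAt_pdx (hdiff _)) hwx (hasDerivAt_pdx (hdiff_pdx _))
  have hwt : pdt w x₀ t₀ + ε ≤ 0 := hmin_t.hasDerivAt_nonpos_of_mem_Ioc ht₀
    ((hasDerivAt_pdt (hdiff _)).add (by simpa using (hasDerivAt_id' t₀).const_mul ε))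
  have hcw := hsign x₀ hx₀ t₀ ht₀ hwβ
  have hsuper₀ := hsuper x₀ hx₀ t₀ ht₀
  rw [ellipticOp, hwx, mul_zero, add_zero] at hsuper₀
  linarith

end MinimumPrinciple

section Reweighting

variable {v u c : ℝ → ℝ → ℝ} {x t : ℝ} (k : ℝ)

theorem contDiff_exp_mul {n : WithTop ℕ∞} (hv : ContDiff ℝ n (uncurry v)) :
    ContDiff ℝ n (uncurry fun x t => Real.exp (k * t) * v x t) :=
  ((Real.contDiff_exp.of_le le_top).comp (contDiff_const.mul contDiff_snd)).mul hv

theorem pdt_exp_mul (hv : DifferentiableAt ℝ (fun s => v x s) t) :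
    pdt (fun x t => Real.exp (k * t) * v x t) x t
      = Real.exp (k * t) * (pdt v x t + k * v x t) := by
  have hexp : HasDerivAt (fun s => Real.exp (k * s)) (Real.exp (k * t) * k) t := by
    simpa using ((hasDerivAt_id' t).const_mul k).exp
  rw [pdt, (hexp.fun_mul hv.hasDerivAt).deriv, pdt]
  ring

theorem pdt_exp_mul_eq_ellipticOp (hv : DifferentiableAt ℝ (fun s => v x s) t)
    (h : pdt v x t = ellipticOp u c v x t) :
    pdt (fun x t => Real.exp (k * t) * v x t) x t
      = ellipticOp u (fun x t => c x t + k) (fun x t => Real.exp (k * t) * v x t) x t := by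
  rw [pdt_exp_mul k hv, h, ellipticOp, ellipticOp, pdx_const_mul, pdx_const_mul]
  ring

end Reweighting

theorem pdt_eq_ellipticOp_of_conservative {a b t : ℝ} {u v : ℝ → ℝ → ℝ} (hab : a ≠ b)
    (hu : ContDiff ℝ 1 (uncurry u)) (hv : ContDiff ℝ 2 (uncurry v))
    (hpde : ∀ x ∈ Ioo a b, pdt v x t - pdx (fun y s => u y s * v y s) x t = pdx (pdx v) x t) :
    ∀ x ∈ Icc a b, pdt v x t = ellipticOp u (pdx u) v x t := by
  have hdu := hu.differentiable one_ne_zero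
  have hdv := hv.differentiable two_ne_zero
  have hslice : Continuous fun y : ℝ => (y, t) := by fun_prop
  have hvx := contDiff_uncurry_pdx (n := 1) hv
  have hvt : Continuous fun y => pdt v y t :=
    (contDiff_uncurry_pdt (n := 1) hv).continuous.comp hslice
  have hL : Continuous fun y => ellipticOp u (pdx u) v y t :=
    (((contDiff_uncurry_pdx (n := 0) hvx).continuous.comp hslice).add
      ((hu.continuous.comp hslice).mul (hvx.continuous.comp hslice))).add
      (((contDiff_uncurry_pdx (n := 0) hu).continuous.comp hslice).mul
        (hv.continuous.comp hslice))
  have hopen : EqOn (fun y => pdt v y t) (fun y => ellipticOp u (pdx u) v y t) (Ioo a b) := by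
    intro x hx
    have hprod : pdx (fun y s => u y s * v y s) x t = pdx u x t * v x t + u x t * pdx v x t :=
      ((hasDerivAt_pdx (hdu _)).mul (hasDerivAt_pdx (hdv _))).deriv
    simp only [ellipticOp]
    linarith [hpde x hx]
  rw [← closure_Ioo hab]
  exact hopen.closure hvt hL

theorem statement14_general (T α M : ℝ) (hα : 0 < α)
    (u v : ℝ → ℝ → ℝ)
    (hu : ContDiff ℝ 2 (Function.uncurry u))
    (hv : ContDiff ℝ 2 (Function.uncurry v))
    (hpde : ∀ x ∈ Set.Ioo (0:ℝ) 1, ∀ t ∈ Set.Ioc (0:ℝ) T,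
      pdt v x t - pdx (fun y s => u y s * v y s) x t = pdx (pdx v) x t)
    (hbc : ∀ t ∈ Set.Icc (0:ℝ) T, pdx v 0 t = 0 ∧ pdx v 1 t = 0)
    (hinit : ∀ x ∈ Set.Icc (0:ℝ) 1, α ≤ v x 0)
    (hM : ∀ x ∈ Set.Icc (0:ℝ) 1, ∀ t ∈ Set.Icc (0:ℝ) T, |pdx u x t| ≤ M) :
    ∀ x ∈ Set.Icc (0:ℝ) 1, ∀ t ∈ Set.Icc (0:ℝ) T,
      α * Real.exp (-M * t) ≤ v x t ∧
      α * Real.exp (-M * T) ≤ α * Real.exp (-M * t) := by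
  have hL x (hx : x ∈ Icc (0 : ℝ) 1) t (ht : t ∈ Ioc 0 T) :
      pdt v x t = ellipticOp u (pdx u) v x t :=
    pdt_eq_ellipticOp_of_conservative zero_ne_one (hu.of_le one_le_two) hv
      (fun y hy => hpde y hy t ht) x hx
  -- `e^{kt} v` is a Neumann solution with zeroth-order coefficient `u_x + k`
  have hreweighted (k β : ℝ) (hβ : ∀ x ∈ Icc (0 : ℝ) 1, β ≤ v x 0)
      (hsign : ∀ x ∈ Icc (0 : ℝ) 1, ∀ t ∈ Ioc 0 T, Real.exp (k * t) * v x t < β →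
        0 ≤ (pdx u x t + k) * (Real.exp (k * t) * v x t)) :
      ∀ x ∈ Icc (0 : ℝ) 1, ∀ t ∈ Icc 0 T, β ≤ Real.exp (k * t) * v x t :=
    le_of_neumann_supersolution zero_lt_one (contDiff_exp_mul k hv)
      (fun x hx t ht => (pdt_exp_mul_eq_ellipticOp k
        (hasDerivAt_pdt (hv.differentiable two_ne_zero _)).differentiableAt (hL x hx t ht)).ge)
      (fun t ht => by simp [pdx_const_mul, hbc t (Ioc_subset_Icc_self ht)])
      (by simpa using hβ) hsign
  have hux x (hx : x ∈ Icc (0 : ℝ) 1) t (ht : t ∈ Ioc 0 T) : |pdx u x t| ≤ M :=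
    hM x hx t (Ioc_subset_Icc_self ht)
  have hv_nonneg : ∀ x ∈ Icc (0 : ℝ) 1, ∀ t ∈ Icc 0 T, 0 ≤ v x t := fun x hx t ht =>
    nonneg_of_mul_nonneg_right
      (hreweighted (-M) 0 (fun x hx => hα.le.trans (hinit x hx))
        (fun x hx t ht hneg => mul_nonneg_of_nonpos_of_nonpos
          (by linarith [le_abs_self (pdx u x t), hux x hx t ht]) hneg.le) x hx t ht)
      (Real.exp_pos _)
  intro x hx t ht
  have hbound := hreweighted M α hinit (fun x hx t ht _ => mul_nonneg
    (by linarith [neg_abs_le (pdx u x t), hux x hx t ht])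
    (mul_nonneg (Real.exp_pos _).le (hv_nonneg x hx t (Ioc_subset_Icc_self ht)))) x hx t ht
  have hM₀ : 0 ≤ M := (abs_nonneg _).trans (hM x hx t ht)
  constructor
  · rwa [neg_mul, Real.exp_neg, ← div_eq_mul_inv, div_le_iff₀ (Real.exp_pos _), mul_comm]
  · gcongr α * Real.exp ?_
    nlinarith [ht.2]

/-- lower bound (3.4): if `v` is a `C²` solution of
`v_t − (u v)_x = v_xx` on `(0,1) × (0,T]` with Neumann boundary conditions,
`v(·,0) ≥ α`, and `M` bounds `sup |u_x|` on `[0,1] × [0,T]`, then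
`v(x,t) ≥ α e^{−M t} ≥ α e^{−M T}` on `[0,1] × [0,T]`. -/
theorem statement14 (T α M : ℝ) (hT : 0 < T) (hα : 0 < α)
    (u v : ℝ → ℝ → ℝ)
    (hu : ContDiff ℝ 2 (Function.uncurry u))
    (hv : ContDiff ℝ 2 (Function.uncurry v))
    (hpde : ∀ x ∈ Set.Ioo (0:ℝ) 1, ∀ t ∈ Set.Ioc (0:ℝ) T,
      pdt v x t - pdx (fun y s => u y s * v y s) x t = pdx (pdx v) x t)
    (hbc : ∀ t ∈ Set.Icc (0:ℝ) T, pdx v 0 t = 0 ∧ pdx v 1 t = 0)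
    (hinit : ∀ x ∈ Set.Icc (0:ℝ) 1, α ≤ v x 0)
    (hM : ∀ x ∈ Set.Icc (0:ℝ) 1, ∀ t ∈ Set.Icc (0:ℝ) T, |pdx u x t| ≤ M) :
    ∀ x ∈ Set.Icc (0:ℝ) 1, ∀ t ∈ Set.Icc (0:ℝ) T,
      α * Real.exp (-M * t) ≤ v x t ∧
      α * Real.exp (-M * T) ≤ α * Real.exp (-M * t) :=
  statement14_general T α M hα u v hu hv hpde hbc hinit hM
end

section
/- Let v∞ > 0 and define h(v) = v ln(v/v∞) − (v − v∞) for v > 0. Let Ω₁ = {v : 0 < v ≤ v∞/2} ∪ {v : v ≥ 3v∞/2}. Then sup_{v ∈ Ω₁} |v − v∞| / h(v) = 1/(3 ln(3/2) − 1); in particular, for every v ∈ Ω₁: |v − v∞| ≤ h(v)/(3 ln(3/2) − 1). -/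
/-- The relative entropy function `h(v) = v ln(v/v∞) − (v − v∞)`. -/
noncomputable def relEnt (vinf v : ℝ) : ℝ := v * Real.log (v / vinf) - (v - vinf)

/-!
Since `h(v) = v∞ · klFun (v / v∞)` with `klFun t = t log t + 1 − t`, it suffices to treat
`v∞ = 1`. The function `klFun` is convex and vanishes at `1`, so its secant slopes from `1` are
monotone: for `t ≥ 3/2` we get `klFun t / (t − 1) ≥ klFun (3/2) / (1/2) = 3 log (3/2) − 1`, and
for `t ≤ 1/2` we get `klFun t / (1 − t) ≥ klFun (1/2) / (1/2) = 1 − log 2`, which is the larger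
constant because `27/4 < e²`. The bound is attained at `v = 3v∞/2`, which gives the supremum.
-/

open Real Set InformationTheory

lemma relEnt_eq_mul_klFun {a : ℝ} (ha : a ≠ 0) (v : ℝ) : relEnt a v = a * klFun (v / a) := by
  rw [relEnt, klFun_apply]
  field_simp
  ring

lemma one_lt_three_mul_log_three_halves : 1 < 3 * log (3 / 2) := by
  rw [show 3 * log (3 / 2) = log ((3 / 2) ^ 3) by rw [log_pow]; norm_num,
    lt_log_iff_exp_lt (by norm_num)]
  linarith [exp_one_lt_d9]

lemma log_two_add_three_mul_log_three_halves_lt_two : log 2 + 3 * log (3 / 2) < 2 := by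
  rw [show log 2 + 3 * log (3 / 2) = log (2 * (3 / 2) ^ 3) by
      rw [log_mul (by norm_num) (by norm_num), log_pow]; norm_num,
    log_lt_iff_lt_exp (by norm_num),
    show (2 : ℝ) = 1 + 1 by norm_num, exp_add]
  nlinarith [exp_one_gt_d9]

lemma klFun_three_halves : klFun (3 / 2) = (3 * log (3 / 2) - 1) / 2 := by
  rw [klFun_apply]; ring

lemma klFun_half : klFun (1 / 2) = (1 - log 2) / 2 := by
  rw [klFun_apply, one_div, log_inv]; ring

lemma mul_sub_one_le_klFun {t : ℝ} (ht : 3 / 2 ≤ t) :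
    (3 * log (3 / 2) - 1) * (t - 1) ≤ klFun t := by
  have h := convexOn_klFun.secant_mono (a := 1) (x := 3 / 2) (y := t) (by norm_num [mem_Ici])
    (by norm_num [mem_Ici]) (mem_Ici.2 (by linarith)) (by norm_num) (by linarith) ht
  calc (3 * log (3 / 2) - 1) * (t - 1)
      = (klFun (3 / 2) - klFun 1) / (3 / 2 - 1) * (t - 1) := by
        rw [klFun_one, klFun_three_halves]; ring
    _ ≤ klFun t - klFun 1 := (le_div_iff₀ (by linarith)).1 h
    _ = klFun t := by rw [klFun_one, sub_zero]

lemma mul_one_sub_le_klFun {t : ℝ} (h0 : 0 ≤ t) (ht : t ≤ 1 / 2) :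
    (1 - log 2) * (1 - t) ≤ klFun t := by
  have h := convexOn_klFun.secant_mono (a := 1) (x := t) (y := 1 / 2) (by norm_num [mem_Ici])
    h0 (by norm_num [mem_Ici]) (by linarith) (by norm_num) ht
  calc (1 - log 2) * (1 - t)
      = (klFun (1 / 2) - klFun 1) / (1 / 2 - 1) * (t - 1) := by
        rw [klFun_one, klFun_half]; ring
    _ ≤ klFun t - klFun 1 := (div_le_iff_of_neg (by linarith)).1 h
    _ = klFun t := by rw [klFun_one, sub_zero]

lemma mul_abs_sub_one_le_klFun {t : ℝ} (ht : (0 ≤ t ∧ t ≤ 1 / 2) ∨ 3 / 2 ≤ t) :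
    (3 * log (3 / 2) - 1) * |t - 1| ≤ klFun t := by
  rcases ht with ⟨h0, ht⟩ | ht
  · rw [abs_of_nonpos (by linarith), neg_sub]
    calc (3 * log (3 / 2) - 1) * (1 - t) ≤ (1 - log 2) * (1 - t) :=
          mul_le_mul_of_nonneg_right (by linarith [log_two_add_three_mul_log_three_halves_lt_two])
            (by linarith)
      _ ≤ klFun t := mul_one_sub_le_klFun h0 ht
  · rw [abs_of_nonneg (by linarith)]
    exact mul_sub_one_le_klFun ht

lemma mul_abs_sub_le_relEnt {a v : ℝ} (ha : 0 < a) (hv : (0 ≤ v ∧ v ≤ a / 2) ∨ 3 * a / 2 ≤ v) :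
    (3 * log (3 / 2) - 1) * |v - a| ≤ relEnt a v := by
  have ht : (0 ≤ v / a ∧ v / a ≤ 1 / 2) ∨ 3 / 2 ≤ v / a := by
    rcases hv with ⟨h0, hv⟩ | hv
    · exact Or.inl ⟨by positivity, by rw [div_le_iff₀ ha]; linarith⟩
    · exact Or.inr (by rw [le_div_iff₀ ha]; linarith)
  calc (3 * log (3 / 2) - 1) * |v - a| = a * ((3 * log (3 / 2) - 1) * |v / a - 1|) := by
        rw [div_sub_one ha.ne', abs_div, abs_of_pos ha]; field_simp
    _ ≤ a * klFun (v / a) := by gcongr; exact mul_abs_sub_one_le_klFun ht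
    _ = relEnt a v := (relEnt_eq_mul_klFun ha.ne' v).symm

lemma relEnt_three_halves_mul {a : ℝ} (ha : a ≠ 0) :
    relEnt a (3 * a / 2) = a / 2 * (3 * log (3 / 2) - 1) := by
  rw [relEnt_eq_mul_klFun ha, show 3 * a / 2 / a = 3 / 2 by field_simp, klFun_three_halves]
  ring

/-- bound (2.9): on `Ω₁ = {0 < v ≤ v∞/2} ∪ {v ≥ 3v∞/2}`,
`sup |v − v∞| / h(v) = 1/(3 ln(3/2) − 1)`; in particular
`|v − v∞| ≤ h(v)/(3 ln(3/2) − 1)` for every `v ∈ Ω₁`. -/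
theorem statement16 (vinf : ℝ) (hvinf : 0 < vinf) :
    sSup ((fun v => |v - vinf| / relEnt vinf v) ''
        ({v : ℝ | 0 < v ∧ v ≤ vinf / 2} ∪ {v : ℝ | 3 * vinf / 2 ≤ v}))
      = 1 / (3 * Real.log (3 / 2) - 1) ∧
    ∀ v : ℝ, ((0 < v ∧ v ≤ vinf / 2) ∨ 3 * vinf / 2 ≤ v) →
      |v - vinf| ≤ relEnt vinf v / (3 * Real.log (3 / 2) - 1) := by
  have hc : 0 < 3 * log (3 / 2) - 1 := by linarith [one_lt_three_mul_log_three_halves]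
  have hbound (v : ℝ) (hv : (0 < v ∧ v ≤ vinf / 2) ∨ 3 * vinf / 2 ≤ v) :
      (3 * log (3 / 2) - 1) * |v - vinf| ≤ relEnt vinf v :=
    mul_abs_sub_le_relEnt hvinf (hv.imp_left fun h => ⟨h.1.le, h.2⟩)
  have hattained : |3 * vinf / 2 - vinf| / relEnt vinf (3 * vinf / 2) =
      1 / (3 * log (3 / 2) - 1) := by
    rw [relEnt_three_halves_mul hvinf.ne', show 3 * vinf / 2 - vinf = vinf / 2 by ring,
      abs_of_pos (by positivity)]
    field_simp
  refine ⟨IsGreatest.csSup_eq ⟨⟨3 * vinf / 2, Or.inr (le_refl (3 * vinf / 2)), hattained⟩, ?_⟩,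
    fun v hv => (le_div_iff₀ hc).2 (by linarith [hbound v hv])⟩
  rintro _ ⟨v, hv, rfl⟩
  have hne : v ≠ vinf := by
    rcases hv with ⟨-, h⟩ | (h : 3 * vinf / 2 ≤ v) <;> intro heq <;> linarith
  have hpos : 0 < relEnt vinf v := by
    nlinarith [hbound v hv, abs_pos.2 (sub_ne_zero.2 hne)]
  exact (div_le_div_iff₀ hpos hc).2 (by linarith [hbound v hv])
end
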